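/- arXiv:math/0505144 — 3 statements merged into one kernel-verified Lean document; each statement's English description precedes it below -/
import Mathlib

section
/- Let 0<α<1, k∈ℤ, and 0<A<1. Then there exists a constant C>0 such that for every measurable function f:(0,A)→ℂ with ∫₀^A |f(ρ)|² |log ρ|^k ρ^{1+α} dρ < ∞, the function u(r) := -2 ∫_r^A f(ρ) dρ is well defined for every r∈(0,A) and satisfies ∫₀^A |u(r)|² |log r|^{k-2} r^{-1+α} dr ≤ C ∫₀^A |f(ρ)|² |log ρ|^k ρ^{1+α} dρ. -/
/-!
Weighted Cauchy–Schwarz with `w ρ = |log ρ|^k ρ^(1+α)` gives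
`|∫_r^A f|² ≤ (∫ |f|² w) · ∫_r^A w⁻¹`. Since `α > 0`, the function
`ρ ↦ |log ρ|^k ρ^(α/2)` is increasing on `(0, A]` up to a constant factor (a power of `ρ`
beats any power of `|log ρ|`), so
`∫_r^A w⁻¹ ≲ |log r|^(-k) r^(-α/2) ∫_r^∞ ρ^(-1-α/2) dρ ≲ |log r|^(-k) r^(-α)`.
Hence the integrand on the left is `≲ (∫ |f|² w) / (r |log r|²)`, and `1 / (r |log r|²)`,
with antiderivative `1 / |log r|`, has integral `1 / |log A|` over `(0, A)`.
-/

open MeasureTheory Set Real Filter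

section CauchySchwarz

variable {X E : Type*} [MeasurableSpace X] {μ : Measure X} [NormedAddCommGroup E]

theorem sq_integral_mul_le {φ ψ : X → ℝ} (hφ : MemLp φ 2 μ) (hψ : MemLp ψ 2 μ) :
    (∫ x, φ x * ψ x ∂μ) ^ 2 ≤ (∫ x, φ x ^ 2 ∂μ) * ∫ x, ψ x ^ 2 ∂μ := by
  have hinner : ∀ {g h : X → ℝ} (hg : MemLp g 2 μ) (hh : MemLp h 2 μ),
      inner ℝ (hg.toLp g) (hh.toLp h) = ∫ x, g x * h x ∂μ := by
    intro g h hg hh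
    rw [L2.inner_def]
    refine integral_congr_ae ?_
    filter_upwards [hg.coeFn_toLp, hh.coeFn_toLp] with x hgx hhx
    rw [hgx, hhx, real_inner_comm]
    rfl
  have h := real_inner_mul_inner_self_le (hφ.toLp φ) (hψ.toLp ψ)
  rw [real_inner_comm (hφ.toLp φ), hinner, hinner, hinner] at h
  simpa only [sq] using h

theorem integrable_of_integrable_norm_sq_mul {f : X → E} {w : X → ℝ}
    (hf : AEStronglyMeasurable f μ) (hw : ∀ᵐ x ∂μ, 0 < w x)
    (hfw : Integrable (fun x => ‖f x‖ ^ 2 * w x) μ) (hw' : Integrable (fun x => (w x)⁻¹) μ) :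
    Integrable f μ := by
  refine (hfw.add hw').mono' hf ?_
  filter_upwards [hw] with x hx
  show ‖f x‖ ≤ ‖f x‖ ^ 2 * w x + (w x)⁻¹
  -- `‖f‖² w + w⁻¹ - 2 ‖f‖ = w⁻¹ (‖f‖ w - 1)²`
  have hinv := mul_inv_cancel₀ hx.ne'
  nlinarith [mul_nonneg (inv_pos.2 hx).le (sq_nonneg (‖f x‖ * w x - 1)), norm_nonneg (f x)]

theorem sq_norm_integral_le_integral_norm_sq_mul_mul_integral_inv [NormedSpace ℝ E]
    {f : X → E} {w : X → ℝ}
    (hf : AEStronglyMeasurable f μ) (hw : ∀ᵐ x ∂μ, 0 < w x)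
    (hfw : Integrable (fun x => ‖f x‖ ^ 2 * w x) μ) (hw' : Integrable (fun x => (w x)⁻¹) μ) :
    ‖∫ x, f x ∂μ‖ ^ 2 ≤ (∫ x, ‖f x‖ ^ 2 * w x ∂μ) * ∫ x, (w x)⁻¹ ∂μ := by
  have hwm : AEMeasurable w μ := by
    have : AEMeasurable (fun x => ((w x)⁻¹)⁻¹) μ := hw'.aemeasurable.inv
    simpa using this
  have hfm := hf.norm.aemeasurable
  have hφ : MemLp (fun x => ‖f x‖ * √(w x)) 2 μ := by
    refine (memLp_two_iff_integrable_sq (by fun_prop)).2 (hfw.congr ?_)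
    filter_upwards [hw] with x hx
    rw [mul_pow, sq_sqrt hx.le]
  have hψ : MemLp (fun x => (√(w x))⁻¹) 2 μ := by
    refine (memLp_two_iff_integrable_sq (by fun_prop)).2 (hw'.congr ?_)
    filter_upwards [hw] with x hx
    rw [inv_pow, sq_sqrt hx.le]
  calc ‖∫ x, f x ∂μ‖ ^ 2 ≤ (∫ x, ‖f x‖ * √(w x) * (√(w x))⁻¹ ∂μ) ^ 2 := by
        refine pow_le_pow_left₀ (norm_nonneg _) ((norm_integral_le_integral_norm f).trans_eq
          (integral_congr_ae ?_)) 2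
        filter_upwards [hw] with x hx
        rw [mul_assoc, mul_inv_cancel₀ (sqrt_pos.2 hx).ne', mul_one]
    _ ≤ (∫ x, (‖f x‖ * √(w x)) ^ 2 ∂μ) * ∫ x, (√(w x))⁻¹ ^ 2 ∂μ := sq_integral_mul_le hφ hψ
    _ = (∫ x, ‖f x‖ ^ 2 * w x ∂μ) * ∫ x, (w x)⁻¹ ∂μ := by
        congr 1 <;> refine integral_congr_ae ?_ <;> filter_upwards [hw] with x hx
        · rw [mul_pow, sq_sqrt hx.le]
        · rw [inv_pow, sq_sqrt hx.le]

end CauchySchwarz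

theorem one_add_div_le_mul_exp {m δ t : ℝ} (hm : 0 < m) (hδ : 0 < δ) (ht : 0 ≤ t) :
    1 + t / m ≤ (1 + 1 / (m * δ)) * exp (δ * t) :=
  calc 1 + t / m ≤ (1 + 1 / (m * δ)) * (1 + δ * t) := by
        have hexpand :
            (1 + 1 / (m * δ)) * (1 + δ * t) = 1 + t / m + δ * t + 1 / (m * δ) := by
          field_simp; ring
        rw [hexpand]
        linarith [mul_nonneg hδ.le ht, one_div_pos.2 (mul_pos hm hδ)]
    _ ≤ (1 + 1 / (m * δ)) * exp (δ * t) := by gcongr; linarith [add_one_le_exp (δ * t)]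

theorem exists_rpow_mul_exp_neg_le {a m : ℝ} (ha : 0 < a) (hm : 0 < m) (s : ℝ) :
    ∃ C > 0, ∀ u v, m ≤ v → v ≤ u → u ^ s * exp (-a * u) ≤ C * (v ^ s * exp (-a * v)) := by
  rcases le_or_gt s 0 with hs | hs
  · refine ⟨1, one_pos, fun u v hv hvu => ?_⟩
    rw [one_mul]
    exact mul_le_mul (rpow_le_rpow_of_nonpos (hm.trans_le hv) hvu hs)
      (exp_le_exp.2 (by nlinarith)) (exp_pos _).le (rpow_nonneg (hm.le.trans hv) _)
  · set δ := a / s with hδ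
    set K := 1 + 1 / (m * δ)
    refine ⟨K ^ s, by positivity, fun u v hv hvu => ?_⟩
    have hv0 : 0 < v := hm.trans_le hv
    -- `u / v ≤ 1 + (u - v) / m ≤ K exp (δ (u - v))`; raising to the power `s` turns `δ` into `a`
    have hu : u ≤ K * v * exp (δ * (u - v)) :=
      calc u ≤ v * (1 + (u - v) / m) := by
            have : u - v ≤ v * ((u - v) / m) := by
              rw [mul_div_assoc', le_div_iff₀ hm]; nlinarith
            linarith
        _ ≤ v * (K * exp (δ * (u - v))) := by
            gcongr; exact one_add_div_le_mul_exp hm (by positivity) (by linarith)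
        _ = K * v * exp (δ * (u - v)) := by ring
    have hexp : δ * (u - v) * s + -a * u = -a * v := by rw [hδ]; field_simp; ring
    calc u ^ s * exp (-a * u) ≤ (K * v * exp (δ * (u - v))) ^ s * exp (-a * u) := by
          gcongr; linarith
      _ = K ^ s * (v ^ s * exp (-a * v)) := by
          rw [mul_rpow (by positivity) (exp_pos _).le, mul_rpow (by positivity) hv0.le,
            ← exp_mul, ← hexp, exp_add]
          ring

theorem exists_neg_log_rpow_mul_rpow_le {a A : ℝ} (ha : 0 < a) (hA0 : 0 < A) (hA1 : A < 1)
    (s : ℝ) : ∃ C > 0, ∀ r ρ, 0 < r → r ≤ ρ → ρ ≤ A →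
      (-log r) ^ s * r ^ a ≤ C * ((-log ρ) ^ s * ρ ^ a) := by
  obtain ⟨C, hC, h⟩ := exists_rpow_mul_exp_neg_le ha (neg_pos.2 (log_neg hA0 hA1)) s
  refine ⟨C, hC, fun r ρ hr hrρ hρA => ?_⟩
  have hρ := hr.trans_le hrρ
  have hexp : ∀ x, 0 < x → x ^ a = exp (-a * -log x) := fun x hx => by
    rw [rpow_def_of_pos hx]; ring_nf
  rw [hexp r hr, hexp ρ hρ]
  exact h _ _ (by linarith [log_le_log hρ hρA]) (by linarith [log_le_log hr hrρ])

theorem setIntegral_Ioo_rpow_neg_sub_one_le {a r A : ℝ} (ha : 0 < a) (hr : 0 < r) :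
    ∫ ρ in Ioo r A, ρ ^ (-a - 1) ≤ r ^ (-a) / a := by
  calc ∫ ρ in Ioo r A, ρ ^ (-a - 1) ≤ ∫ ρ in Ioi r, ρ ^ (-a - 1) :=
        setIntegral_mono_set (integrableOn_Ioi_rpow_of_lt (by linarith) hr)
          (ae_restrict_of_forall_mem measurableSet_Ioi fun ρ hρ =>
            rpow_nonneg (hr.trans hρ).le _)
          Ioo_subset_Ioi_self.eventuallyLE
    _ = r ^ (-a) / a := by
        rw [integral_Ioi_rpow_of_lt (by linarith) hr, sub_add_cancel, neg_div_neg_eq]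

theorem exists_setIntegral_Ioo_inv_weight_le {α A : ℝ} (hα : 0 < α) (hA0 : 0 < A)
    (hA1 : A < 1) (s : ℝ) : ∃ C > 0, ∀ r ∈ Ioo 0 A,
      IntegrableOn (fun ρ => ((-log ρ) ^ s * ρ ^ (1 + α))⁻¹) (Ioo r A) ∧
      ∫ ρ in Ioo r A, ((-log ρ) ^ s * ρ ^ (1 + α))⁻¹ ≤ C * ((-log r) ^ s * r ^ α)⁻¹ := by
  obtain ⟨C, hC, hcmp⟩ := exists_neg_log_rpow_mul_rpow_le (half_pos hα) hA0 hA1 s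
  refine ⟨2 / α * C, by positivity, fun r ⟨hr, hrA⟩ => ?_⟩
  have hLr : 0 < -log r := neg_pos.2 (log_neg hr (hrA.trans hA1))
  set b := (-log r) ^ s * r ^ (α / 2)
  have hb : 0 < b := by positivity
  have hdom : IntegrableOn (fun ρ => C * b⁻¹ * ρ ^ (-(α / 2) - 1)) (Ioo r A) :=
    ((integrableOn_Ioi_rpow_of_lt (by linarith) hr).mono_set Ioo_subset_Ioi_self).const_mul _
  have hbound : ∀ ρ ∈ Ioo r A,
      ‖((-log ρ) ^ s * ρ ^ (1 + α))⁻¹‖ ≤ C * b⁻¹ * ρ ^ (-(α / 2) - 1) := by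
    rintro ρ ⟨hrρ, hρA⟩
    have hρ := hr.trans hrρ
    have hLρ : 0 < -log ρ := neg_pos.2 (log_neg hρ (hρA.trans hA1))
    have hsplit :
        (-log ρ) ^ s * ρ ^ (1 + α) = (-log ρ) ^ s * ρ ^ (α / 2) * ρ ^ (α / 2 + 1) := by
      rw [mul_assoc, ← rpow_add hρ]; ring_nf
    rw [norm_of_nonneg (by positivity), hsplit, mul_inv, ← rpow_neg hρ.le, neg_add']
    gcongr
    rw [← div_eq_mul_inv, le_div_iff₀ hb, inv_mul_le_iff₀ (by positivity)]
    linarith [hcmp r ρ hr hrρ.le hρA.le]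
  have hint : IntegrableOn (fun ρ => ((-log ρ) ^ s * ρ ^ (1 + α))⁻¹) (Ioo r A) :=
    hdom.mono' (by fun_prop) (ae_restrict_of_forall_mem measurableSet_Ioo hbound)
  refine ⟨hint, ?_⟩
  calc ∫ ρ in Ioo r A, ((-log ρ) ^ s * ρ ^ (1 + α))⁻¹
      ≤ ∫ ρ in Ioo r A, C * b⁻¹ * ρ ^ (-(α / 2) - 1) :=
        setIntegral_mono_on hint hdom measurableSet_Ioo fun ρ hρ =>
          (le_norm_self _).trans (hbound ρ hρ)
    _ ≤ C * b⁻¹ * (r ^ (-(α / 2)) / (α / 2)) := by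
        rw [integral_const_mul]
        gcongr
        exact setIntegral_Ioo_rpow_neg_sub_one_le (half_pos hα) hr
    _ = 2 / α * C * ((-log r) ^ s * r ^ α)⁻¹ := by
        have : r ^ α = r ^ (α / 2) * r ^ (α / 2) := by rw [← rpow_add hr]; ring_nf
        rw [this, rpow_neg hr.le]
        field_simp
        exact mul_comm _ _

theorem hasDerivAt_inv_neg_log {r : ℝ} (hr0 : 0 < r) (hr1 : r < 1) :
    HasDerivAt (fun x => (-log x)⁻¹) (r * (-log r) ^ 2)⁻¹ r := by
  have hL : -log r ≠ 0 := (neg_pos.2 (log_neg hr0 hr1)).ne'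
  refine (((hasDerivAt_log hr0.ne').neg).inv hL).congr_deriv ?_
  rw [neg_neg, mul_inv, div_eq_mul_inv, Pi.neg_apply]

theorem continuousOn_inv_neg_log_Icc {A : ℝ} (hA1 : A < 1) :
    ContinuousOn (fun x => (-log x)⁻¹) (Icc 0 A) := by
  intro x ⟨hx0, hxA⟩
  rcases hx0.eq_or_lt with rfl | hx0
  · -- `log 0 = 0` in Mathlib, so the value `(-log 0)⁻¹ = 0` is also the limit from the right
    refine (continuousWithinAt_Ioi_iff_Ici.1 ?_).mono Icc_subset_Ici_self
    have := tendsto_inv_atTop_zero.comp (tendsto_neg_atBot_atTop.comp tendsto_log_nhdsGT_zero)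
    simpa [ContinuousWithinAt, Function.comp_def] using this
  · exact (hasDerivAt_inv_neg_log hx0 (hxA.trans_lt hA1)).continuousAt.continuousWithinAt

theorem integral_Ioo_inv_mul_neg_log_sq {A : ℝ} (hA0 : 0 < A) (hA1 : A < 1) :
    IntegrableOn (fun r => (r * (-log r) ^ 2)⁻¹) (Ioo 0 A) ∧
      ∫ r in Ioo 0 A, (r * (-log r) ^ 2)⁻¹ = (-log A)⁻¹ := by
  have hderiv : ∀ x ∈ Ioo 0 A, HasDerivAt (fun x => (-log x)⁻¹) (x * (-log x) ^ 2)⁻¹ x :=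
    fun x hx => hasDerivAt_inv_neg_log hx.1 (hx.2.trans hA1)
  have hint := intervalIntegral.integrableOn_deriv_of_nonneg
    (continuousOn_inv_neg_log_Icc hA1) hderiv fun x hx => by have := hx.1; positivity
  refine ⟨hint.mono_set Ioo_subset_Ioc_self, ?_⟩
  rw [← integral_Ioc_eq_integral_Ioo, ← intervalIntegral.integral_of_le hA0.le,
    intervalIntegral.integral_eq_sub_of_hasDerivAt_of_le hA0.le
      (continuousOn_inv_neg_log_Icc hA1) hderiv
      ((intervalIntegrable_iff_integrableOn_Ioc_of_le hA0.le).2 hint)]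
  simp

theorem exists_sq_norm_setIntegral_Ioo_le {E : Type*} [NormedAddCommGroup E]
    [NormedSpace ℝ E] {α A : ℝ} (hα : 0 < α) (hA0 : 0 < A) (hA1 : A < 1) (s : ℝ) :
    ∃ C > 0, ∀ f : ℝ → E, AEStronglyMeasurable f →
      IntegrableOn (fun ρ => ‖f ρ‖ ^ 2 * (-log ρ) ^ s * ρ ^ (1 + α)) (Ioo 0 A) →
      ∀ r ∈ Ioo 0 A, IntegrableOn f (Ioo r A) ∧
        ‖∫ ρ in Ioo r A, f ρ‖ ^ 2 ≤
          C * (∫ ρ in Ioo 0 A, ‖f ρ‖ ^ 2 * (-log ρ) ^ s * ρ ^ (1 + α)) *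
            ((-log r) ^ s * r ^ α)⁻¹ := by
  obtain ⟨C, hC, htail⟩ := exists_setIntegral_Ioo_inv_weight_le hα hA0 hA1 s
  refine ⟨C, hC, fun f hf hfw r hr => ?_⟩
  obtain ⟨hwint, hwle⟩ := htail r hr
  have hpos : ∀ ρ ∈ Ioo 0 A, 0 < -log ρ := fun ρ hρ =>
    neg_pos.2 (log_neg hρ.1 (hρ.2.trans hA1))
  have hsub : Ioo r A ⊆ Ioo 0 A := Ioo_subset_Ioo_left hr.1.le
  have hw : ∀ᵐ ρ ∂volume.restrict (Ioo r A), 0 < (-log ρ) ^ s * ρ ^ (1 + α) :=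
    ae_restrict_of_forall_mem measurableSet_Ioo fun ρ hρ => by
      have := hpos ρ (hsub hρ); have := hr.1.trans hρ.1; positivity
  have hfw' :
      IntegrableOn (fun ρ => ‖f ρ‖ ^ 2 * ((-log ρ) ^ s * ρ ^ (1 + α))) (Ioo r A) := by
    simpa only [mul_assoc] using hfw.mono_set hsub
  refine ⟨integrable_of_integrable_norm_sq_mul hf.restrict hw hfw' hwint, ?_⟩
  have hnonneg : ∀ ρ ∈ Ioo 0 A, 0 ≤ ‖f ρ‖ ^ 2 * (-log ρ) ^ s * ρ ^ (1 + α) := by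
    intro ρ hρ
    have := hpos ρ hρ; have := hρ.1; positivity
  have hmono : ∫ ρ in Ioo r A, ‖f ρ‖ ^ 2 * ((-log ρ) ^ s * ρ ^ (1 + α)) ≤
      ∫ ρ in Ioo 0 A, ‖f ρ‖ ^ 2 * (-log ρ) ^ s * ρ ^ (1 + α) := by
    simpa only [mul_assoc] using setIntegral_mono_set hfw
      (ae_restrict_of_forall_mem measurableSet_Ioo hnonneg) hsub.eventuallyLE
  calc ‖∫ ρ in Ioo r A, f ρ‖ ^ 2
      ≤ (∫ ρ in Ioo r A, ‖f ρ‖ ^ 2 * ((-log ρ) ^ s * ρ ^ (1 + α))) *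
          ∫ ρ in Ioo r A, ((-log ρ) ^ s * ρ ^ (1 + α))⁻¹ :=
        sq_norm_integral_le_integral_norm_sq_mul_mul_integral_inv hf.restrict hw hfw' hwint
    _ ≤ (∫ ρ in Ioo 0 A, ‖f ρ‖ ^ 2 * (-log ρ) ^ s * ρ ^ (1 + α)) *
          (C * ((-log r) ^ s * r ^ α)⁻¹) :=
        mul_le_mul hmono hwle (integral_nonneg_of_ae (hw.mono fun ρ hρ => (inv_pos.2 hρ).le))
          (setIntegral_nonneg measurableSet_Ioo hnonneg)
    _ = _ := by ring

theorem sq_norm_neg_two_smul_mul_weight_le {E : Type*} [NormedAddCommGroup E]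
    [NormedSpace ℝ E] {u : E} {B α r : ℝ} {k : ℤ} (hr0 : 0 < r) (hr1 : r < 1)
    (hu : ‖u‖ ^ 2 ≤ B * ((-log r) ^ k * r ^ α)⁻¹) :
    ‖(-2 : ℝ) • u‖ ^ 2 * (-log r) ^ (k - 2) * r ^ (-1 + α) ≤ 4 * B * (r * (-log r) ^ 2)⁻¹ := by
  have hL : 0 < -log r := neg_pos.2 (log_neg hr0 hr1)
  have hweight : ((-log r) ^ k * r ^ α)⁻¹ * ((-log r) ^ (k - 2) * r ^ (-1 + α)) =
      (r * (-log r) ^ 2)⁻¹ := by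
    have := (rpow_pos_of_pos hr0 α).ne'
    rw [zpow_sub₀ hL.ne', rpow_add hr0, rpow_neg_one]
    field_simp
  calc ‖(-2 : ℝ) • u‖ ^ 2 * (-log r) ^ (k - 2) * r ^ (-1 + α)
      = 4 * ‖u‖ ^ 2 * ((-log r) ^ (k - 2) * r ^ (-1 + α)) := by
        rw [norm_smul]; norm_num; ring
    _ ≤ 4 * (B * ((-log r) ^ k * r ^ α)⁻¹) * ((-log r) ^ (k - 2) * r ^ (-1 + α)) := by
        gcongr
    _ = 4 * B * (r * (-log r) ^ 2)⁻¹ := by rw [← hweight]; ring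

theorem stmt_1_general (α : ℝ) (hα0 : 0 < α)
    (k : ℤ) (A : ℝ) (hA0 : 0 < A) (hA1 : A < 1) :
    ∃ C : ℝ, 0 < C ∧ ∀ f : ℝ → ℂ, Measurable f →
      IntegrableOn (fun ρ : ℝ => ‖f ρ‖ ^ 2 * (-Real.log ρ) ^ k * ρ ^ (1 + α)) (Ioo 0 A) →
      ((∀ r ∈ Ioo (0 : ℝ) A, IntegrableOn f (Ioo r A)) ∧
        ∫ r in Ioo (0 : ℝ) A,
            ‖(-2 : ℝ) • ∫ ρ in Ioo r A, f ρ‖ ^ 2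
              * (-Real.log r) ^ (k - 2) * r ^ (-1 + α)
          ≤ C * ∫ ρ in Ioo (0 : ℝ) A, ‖f ρ‖ ^ 2 * (-Real.log ρ) ^ k * ρ ^ (1 + α)) := by
  obtain ⟨C, hC, hbound⟩ := exists_sq_norm_setIntegral_Ioo_le (E := ℂ) hα0 hA0 hA1 k
  simp only [rpow_intCast] at hbound
  obtain ⟨hint, hval⟩ := integral_Ioo_inv_mul_neg_log_sq hA0 hA1
  have hLA : 0 < -log A := neg_pos.2 (log_neg hA0 hA1)
  refine ⟨4 * C * (-log A)⁻¹, by positivity, fun f hf hfw =>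
    ⟨fun r hr => (hbound f hf.aestronglyMeasurable hfw r hr).1, ?_⟩⟩
  set I := ∫ ρ in Ioo 0 A, ‖f ρ‖ ^ 2 * (-log ρ) ^ k * ρ ^ (1 + α)
  calc _ ≤ ∫ r in Ioo 0 A, 4 * (C * I) * (r * (-log r) ^ 2)⁻¹ := by
        refine integral_mono_of_nonneg ?_ (hint.const_mul _) ?_ <;>
          refine ae_restrict_of_forall_mem measurableSet_Ioo fun r hr => ?_
        · have := neg_pos.2 (log_neg hr.1 (hr.2.trans hA1)); have := hr.1; positivity
        · exact sq_norm_neg_two_smul_mul_weight_le hr.1 (hr.2.trans hA1)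
            (hbound f hf.aestronglyMeasurable hfw r hr).2
    _ = 4 * C * (-log A)⁻¹ * I := by rw [integral_const_mul, hval]; ring

/-- Weighted Hardy-type inequality, case `n = 0`, from the proof of Lemma 3. -/
theorem stmt_1 (α : ℝ) (hα0 : 0 < α) (hα1 : α < 1)
    (k : ℤ) (A : ℝ) (hA0 : 0 < A) (hA1 : A < 1) :
    ∃ C : ℝ, 0 < C ∧ ∀ f : ℝ → ℂ, Measurable f →
      IntegrableOn (fun ρ : ℝ => ‖f ρ‖ ^ 2 * (-Real.log ρ) ^ k * ρ ^ (1 + α)) (Ioo 0 A) →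
      ((∀ r ∈ Ioo (0 : ℝ) A, IntegrableOn f (Ioo r A)) ∧
        ∫ r in Ioo (0 : ℝ) A,
            ‖(-2 : ℝ) • ∫ ρ in Ioo r A, f ρ‖ ^ 2
              * (-Real.log r) ^ (k - 2) * r ^ (-1 + α)
          ≤ C * ∫ ρ in Ioo (0 : ℝ) A, ‖f ρ‖ ^ 2 * (-Real.log ρ) ^ k * ρ ^ (1 + α)) :=
  stmt_1_general α hα0 k A hA0 hA1
end

section
/- Let n be a positive integer, let 0<α<1, k∈ℤ, and 0<A<1. Then there exists a constant C>0 such that for every measurable function f:(0,A)→ℂ with ∫₀^A |f(ρ)|² |log ρ|^k ρ^{1+α} dρ < ∞, the function u(r) := -2 r^n ∫_r^A ρ^{-n} f(ρ) dρ is well defined for every r∈(0,A) and satisfies ∫₀^A |u(r)|² |log r|^{k-2} r^{-1+α} dr ≤ C ∫₀^A |f(ρ)|² |log ρ|^k ρ^{1+α} dρ. -/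
open MeasureTheory Set Real

/-!
Put `β = 2n + α`. Cauchy–Schwarz against the weight `w ρ = |log ρ|^k ρ^(1+α)` gives
`|∫_r^A ρ^(-n) f|² ≤ (∫_r^A ρ^(-β-1) |log ρ|^(-k) dρ) · ∫_0^A |f|² w`, and the kernel integral is
`O(r^(-β) |log r|^(-k))`, because up to constants the derivative of
`-ρ^(-β) (|log ρ| + M)^(-k)` dominates the integrand once `M` is large, while `|log ρ| + M` and
`|log ρ|` are comparable on `(0, A)`. Multiplying by `4 r^(2n) |log r|^(k-2) r^(-1+α)` all powers of
`r` but `r⁻¹` cancel, and `r⁻¹ |log r|^(-2)`, the derivative of `-1/log r`, has integral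
`1/|log A|` over `(0, A)`.
-/

lemma zpow_le_pow_natAbs_mul_zpow {K : Type*} [Field K] [LinearOrder K] [IsStrictOrderedRing K]
    {x y c : K} (hx : 0 < x) (hy : 0 < y) (hxy : x ≤ c * y) (hyx : y ≤ c * x) (m : ℤ) :
    x ^ m ≤ c ^ m.natAbs * y ^ m := by
  have hc : 0 ≤ c := nonneg_of_mul_nonneg_left (hx.le.trans hxy) hy
  obtain ⟨n, rfl | rfl⟩ := Int.eq_nat_or_neg m
  · simpa [mul_pow] using pow_le_pow_left₀ hx.le hxy n
  · have := pow_le_pow_left₀ hy.le hyx n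
    rw [mul_pow] at this
    simp only [zpow_neg, zpow_natCast, Int.natAbs_neg, Int.natAbs_natCast]
    rw [← div_eq_mul_inv, le_div_iff₀ (pow_pos hy n), inv_mul_le_iff₀ (pow_pos hx n), mul_comm]
    exact this

lemma norm_smul_eq_sqrt_mul_sqrt {E : Type*} [NormedAddCommGroup E] [NormedSpace ℝ E]
    (c : ℝ) (v : E) {w : ℝ} (hw : 0 < w) :
    ‖c • v‖ = √(c ^ 2 / w) * √(‖v‖ ^ 2 * w) := by
  rw [← sqrt_mul (by positivity), show c ^ 2 / w * (‖v‖ ^ 2 * w) = (c * ‖v‖) ^ 2 by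
    field_simp, sqrt_sq_eq_abs, norm_smul, norm_eq_abs, abs_mul, abs_norm]

section WeightedCauchySchwarz

variable {X E : Type*} [MeasurableSpace X] {μ : Measure X} [NormedAddCommGroup E]
  [NormedSpace ℝ E] {g w : X → ℝ} {f : X → E}

lemma memLp_two_sqrt {h : X → ℝ} (hh : Integrable h μ) (h0 : 0 ≤ᵐ[μ] h) :
    MemLp (fun x => √(h x)) 2 μ :=
  (memLp_two_iff_integrable_sq (continuous_sqrt.comp_aestronglyMeasurable hh.1)).2 <|
    hh.congr <| by filter_upwards [h0] with x hx using (sq_sqrt hx).symm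

lemma integrable_smul_of_weighted (hw : ∀ᵐ x ∂μ, 0 < w x) (hgm : AEStronglyMeasurable g μ)
    (hfm : AEStronglyMeasurable f μ) (hg : Integrable (fun x => g x ^ 2 / w x) μ)
    (hf : Integrable (fun x => ‖f x‖ ^ 2 * w x) μ) :
    Integrable (fun x => g x • f x) μ := by
  have hg0 : 0 ≤ᵐ[μ] fun x => g x ^ 2 / w x := by
    filter_upwards [hw] with x hx using by positivity
  have hf0 : 0 ≤ᵐ[μ] fun x => ‖f x‖ ^ 2 * w x := by
    filter_upwards [hw] with x hx using by positivity
  refine ((memLp_two_sqrt hg hg0).integrable_mul (memLp_two_sqrt hf hf0)).mono' (hgm.smul hfm) ?_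
  filter_upwards [hw] with x hx using (norm_smul_eq_sqrt_mul_sqrt _ _ hx).le

lemma norm_integral_smul_sq_le_of_weighted (hw : ∀ᵐ x ∂μ, 0 < w x)
    (hg : Integrable (fun x => g x ^ 2 / w x) μ) (hf : Integrable (fun x => ‖f x‖ ^ 2 * w x) μ) :
    ‖∫ x, g x • f x ∂μ‖ ^ 2 ≤ (∫ x, g x ^ 2 / w x ∂μ) * ∫ x, ‖f x‖ ^ 2 * w x ∂μ := by
  have hg0 : 0 ≤ᵐ[μ] fun x => g x ^ 2 / w x := by
    filter_upwards [hw] with x hx using by positivity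
  have hf0 : 0 ≤ᵐ[μ] fun x => ‖f x‖ ^ 2 * w x := by
    filter_upwards [hw] with x hx using by positivity
  have holder := integral_mul_le_Lp_mul_Lq_of_nonneg Real.HolderConjugate.two_two
    (ae_of_all _ fun x => sqrt_nonneg _) (ae_of_all _ fun x => sqrt_nonneg _)
    (ENNReal.ofReal_ofNat 2 ▸ memLp_two_sqrt hg hg0)
    (ENNReal.ofReal_ofNat 2 ▸ memLp_two_sqrt hf hf0)
  have hsq {h : X → ℝ} (h0 : 0 ≤ᵐ[μ] h) : ∫ x, √(h x) ^ (2 : ℝ) ∂μ = ∫ x, h x ∂μ :=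
    integral_congr_ae <| by filter_upwards [h0] with x hx using by rw [rpow_two, sq_sqrt hx]
  rw [hsq hg0, hsq hf0, ← sqrt_eq_rpow, ← sqrt_eq_rpow] at holder
  calc ‖∫ x, g x • f x ∂μ‖ ^ 2 ≤ (∫ x, ‖g x • f x‖ ∂μ) ^ 2 :=
        pow_le_pow_left₀ (norm_nonneg _) (norm_integral_le_integral_norm _) 2
    _ = (∫ x, √(g x ^ 2 / w x) * √(‖f x‖ ^ 2 * w x) ∂μ) ^ 2 := by
        congr 1
        exact integral_congr_ae <| by
          filter_upwards [hw] with x hx using norm_smul_eq_sqrt_mul_sqrt _ _ hx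
    _ ≤ (√(∫ x, g x ^ 2 / w x ∂μ) * √(∫ x, ‖f x‖ ^ 2 * w x ∂μ)) ^ 2 :=
        pow_le_pow_left₀ (integral_nonneg fun x => by positivity) holder 2
    _ = _ := by
        rw [mul_pow, sq_sqrt (integral_nonneg_of_ae hg0), sq_sqrt (integral_nonneg_of_ae hf0)]

end WeightedCauchySchwarz

-- `log 0 = 0`, so the junk value `(log 0)⁻¹ = 0` is also the limit at `0`.
lemma continuousAt_inv_log_zero : ContinuousAt (fun x => (log x)⁻¹) 0 := by
  rw [← continuousWithinAt_compl_self, ContinuousWithinAt, log_zero, inv_zero]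
  exact tendsto_log_nhdsNE_zero.inv_tendsto_atBot

lemma hasDerivAt_neg_inv_log {x : ℝ} (hx0 : 0 < x) (hx1 : x < 1) :
    HasDerivAt (fun x => -(log x)⁻¹) (x⁻¹ / log x ^ 2) x := by
  simpa [neg_div] using (hasDerivAt_inv_log hx0.ne' hx1.ne (by linarith)).fun_neg

lemma continuousOn_inv_log_Icc_zero {A : ℝ} (hA1 : A < 1) :
    ContinuousOn (fun x => (log x)⁻¹) (Icc 0 A) := by
  intro x hx
  rcases hx.1.eq_or_lt with rfl | hx0
  · exact continuousAt_inv_log_zero.continuousWithinAt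
  · exact (hasDerivAt_inv_log hx0.ne' (by linarith [hx.2]) (by linarith)).continuousAt
      |>.continuousWithinAt

lemma integrableOn_inv_div_log_sq_Ioo_zero {A : ℝ} (hA1 : A < 1) :
    IntegrableOn (fun r => r⁻¹ / log r ^ 2) (Ioo 0 A) :=
  (intervalIntegral.integrableOn_deriv_of_nonneg (continuousOn_inv_log_Icc_zero hA1).neg
    (fun _ hx => hasDerivAt_neg_inv_log hx.1 (hx.2.trans hA1))
    fun _ hx => div_nonneg (inv_nonneg.2 hx.1.le) (sq_nonneg _)).mono_set
    Ioo_subset_Ioc_self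

lemma integral_inv_div_log_sq_Ioo_zero {A : ℝ} (hA0 : 0 ≤ A) (hA1 : A < 1) :
    ∫ r in Ioo 0 A, r⁻¹ / log r ^ 2 = -(log A)⁻¹ := by
  rw [← integral_Ioc_eq_integral_Ioo, ← intervalIntegral.integral_of_le hA0,
    intervalIntegral.integral_eq_sub_of_hasDerivAt_of_le hA0
      (continuousOn_inv_log_Icc_zero hA1).neg
      (fun x hx => hasDerivAt_neg_inv_log hx.1 (hx.2.trans hA1))
      ((intervalIntegrable_iff_integrableOn_Ioo_of_le hA0).2
        (integrableOn_inv_div_log_sq_Ioo_zero hA1))]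
  simp

lemma hasDerivAt_rpow_mul_neg_log_add_zpow (β M : ℝ) (m : ℤ) {x : ℝ} (hx : 0 < x)
    (hL : 0 < -log x + M) :
    HasDerivAt (fun x => x ^ (-β) * (-log x + M) ^ m)
      (-(x ^ (-β - 1) * (-log x + M) ^ (m - 1) * (β * (-log x + M) + m))) x := by
  have d1 : HasDerivAt (fun x => x ^ (-β)) (-β * x ^ (-β - 1)) x :=
    hasDerivAt_rpow_const (Or.inl hx.ne')
  have d2 := (hasDerivAt_zpow m (-log x + M) (Or.inl hL.ne')).comp x
      ((hasDerivAt_log hx.ne').fun_neg.add_const M)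
  refine (d1.mul d2).congr_deriv ?_
  rw [Function.comp_apply, rpow_sub_one hx.ne', zpow_sub_one₀ hL.ne']
  field_simp
  ring

lemma continuousOn_rpow_mul_neg_log_zpow (a : ℝ) (m : ℤ) {s : Set ℝ} (hs : s ⊆ Ioo 0 1) :
    ContinuousOn (fun ρ => ρ ^ a * (-log ρ) ^ m) s :=
  fun x hx => by
    have hx := hs hx
    have hL : -log x ≠ 0 := (neg_pos.2 (log_neg hx.1 hx.2)).ne'
    exact ((continuousAt_id.rpow_const (Or.inl hx.1.ne')).mul
      ((continuousAt_log hx.1.ne').neg.zpow₀ m (Or.inl hL))).continuousWithinAt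

lemma zpow_le_pow_natAbs_mul_zpow_add {a L M : ℝ} (ha : 0 < a) (hL : a ≤ L) (hM : 0 ≤ M)
    (m : ℤ) :
    L ^ m ≤ (1 + M / a) ^ m.natAbs * (L + M) ^ m ∧
      (L + M) ^ m ≤ (1 + M / a) ^ m.natAbs * L ^ m := by
  have hL0 : 0 < L := ha.trans_le hL
  have hMa : 0 ≤ M / a := div_nonneg hM ha.le
  have h1 : L ≤ (1 + M / a) * (L + M) := by nlinarith
  have h2 : L + M ≤ (1 + M / a) * L := by
    have : M ≤ M / a * L := by
      rw [div_mul_eq_mul_div, le_div_iff₀ ha]; exact mul_le_mul_of_nonneg_left hL hM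
    linarith
  exact ⟨zpow_le_pow_natAbs_mul_zpow hL0 (by linarith) h1 h2 m,
    zpow_le_pow_natAbs_mul_zpow (by linarith) hL0 h2 h1 m⟩

lemma zpow_le_mul_zpow_sub_one_mul {β L M c : ℝ} (hβ : 0 < β) (hL : 0 < L) {m : ℤ}
    (hM : 2 * |(m : ℝ)| ≤ β * M) (hc0 : 0 ≤ c) (hc : L ^ m ≤ c ^ m.natAbs * (L + M) ^ m) :
    L ^ m ≤ 2 * c ^ m.natAbs / β * ((L + M) ^ (m - 1) * (β * (L + M) + m)) := by
  have hLM : 0 < L + M := by nlinarith [abs_nonneg (m : ℝ)]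
  have hpow : (L + M) ^ m = (L + M) ^ (m - 1) * (L + M) := by
    rw [← zpow_add_one₀ hLM.ne', sub_add_cancel]
  calc L ^ m ≤ c ^ m.natAbs * (L + M) ^ m := hc
    _ = 2 * c ^ m.natAbs / β * ((L + M) ^ (m - 1) * (β / 2 * (L + M))) := by
        rw [hpow]; field_simp
    _ ≤ _ := mul_le_mul_of_nonneg_left (mul_le_mul_of_nonneg_left
        (by nlinarith [neg_abs_le (m : ℝ)]) (zpow_pos hLM _).le) (by positivity)

lemma exists_integral_rpow_mul_neg_log_zpow_le {β : ℝ} (hβ : 0 < β) (m : ℤ) {A : ℝ}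
    (hA0 : 0 < A) (hA1 : A < 1) :
    ∃ C > 0, ∀ r ∈ Ioo 0 A,
      ∫ ρ in Ioo r A, ρ ^ (-β - 1) * (-log ρ) ^ m ≤ C * (r ^ (-β) * (-log r) ^ m) := by
  have hlogA : 0 < -log A := neg_pos.2 (log_neg hA0 hA1)
  -- chosen so that `β * (L + M) + m ≥ β / 2 * (L + M)` for `L ≥ 0`
  set M := 2 * |(m : ℝ)| / β with hM
  have hM0 : 0 ≤ M := by positivity
  have hβM : 2 * |(m : ℝ)| ≤ β * M := by rw [hM, mul_div_cancel₀ _ hβ.ne']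
  set c := 1 + M / -log A with hc
  have hcomp : ∀ ρ ∈ Ioo 0 A, (-log ρ) ^ m ≤ c ^ m.natAbs * (-log ρ + M) ^ m ∧
      (-log ρ + M) ^ m ≤ c ^ m.natAbs * (-log ρ) ^ m := fun ρ hρ =>
    zpow_le_pow_natAbs_mul_zpow_add hlogA (neg_le_neg (log_le_log hρ.1 hρ.2.le)) hM0 m
  set K := 2 * c ^ m.natAbs / β with hK
  have hc0 : 0 < c := by rw [hc]; positivity
  have hK0 : 0 < K := by rw [hK]; positivity
  refine ⟨K * c ^ m.natAbs, by positivity, fun r hr => ?_⟩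
  have hsub : Icc r A ⊆ Ioo 0 1 := fun x hx => ⟨hr.1.trans_le hx.1, hx.2.trans_lt hA1⟩
  have hG : ∀ x ∈ Icc r A, HasDerivAt (fun x => -K * (x ^ (-β) * (-log x + M) ^ m))
      (-K * -(x ^ (-β - 1) * (-log x + M) ^ (m - 1) * (β * (-log x + M) + m))) x := fun x hx =>
    ((hasDerivAt_rpow_mul_neg_log_add_zpow β M m (hsub hx).1 (by
      linarith [neg_pos.2 (log_neg (hsub hx).1 (hsub hx).2)])).const_mul (-K))
  have hderiv_ge : ∀ x ∈ Ioo r A, x ^ (-β - 1) * (-log x) ^ m ≤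
      -K * -(x ^ (-β - 1) * (-log x + M) ^ (m - 1) * (β * (-log x + M) + m)) := by
    intro x hx
    have hx0 : 0 < x := hr.1.trans hx.1
    have hL : 0 < -log x := neg_pos.2 (log_neg hx0 (hx.2.trans hA1))
    calc x ^ (-β - 1) * (-log x) ^ m
        ≤ x ^ (-β - 1) * (K * ((-log x + M) ^ (m - 1) * (β * (-log x + M) + m))) :=
          mul_le_mul_of_nonneg_left (zpow_le_mul_zpow_sub_one_mul hβ hL hβM hc0.le
            (hcomp x ⟨hx0, hx.2⟩).1) (rpow_nonneg hx0.le _)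
      _ = _ := by ring
  have hGA : 0 ≤ A ^ (-β) * (-log A + M) ^ m :=
    mul_nonneg (rpow_nonneg hA0.le _) (zpow_pos (by linarith) _).le
  rw [← integral_Ioc_eq_integral_Ioo, ← intervalIntegral.integral_of_le hr.2.le]
  calc ∫ ρ in r..A, ρ ^ (-β - 1) * (-log ρ) ^ m
      ≤ -K * (A ^ (-β) * (-log A + M) ^ m) - -K * (r ^ (-β) * (-log r + M) ^ m) :=
        intervalIntegral.integral_le_sub_of_hasDeriv_right_of_le hr.2.le
          (fun x hx => (hG x hx).continuousAt.continuousWithinAt)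
          (fun x hx => (hG x (Ioo_subset_Icc_self hx)).hasDerivWithinAt)
          ((continuousOn_rpow_mul_neg_log_zpow _ m hsub).integrableOn_Icc) hderiv_ge
    _ ≤ K * (r ^ (-β) * (-log r + M) ^ m) := by nlinarith
    _ ≤ K * (r ^ (-β) * (c ^ m.natAbs * (-log r) ^ m)) := by
        gcongr
        · exact rpow_nonneg hr.1.le _
        · exact (hcomp r hr).2
    _ = _ := by ring

lemma zpow_neg_sq_div_weight {ρ : ℝ} (hρ : 0 < ρ) (n k : ℤ) (α : ℝ) :
    (ρ ^ (-n)) ^ 2 / ((-log ρ) ^ k * ρ ^ (1 + α)) = ρ ^ (-(2 * n + α) - 1) * (-log ρ) ^ (-k) := by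
  rw [div_eq_mul_inv, mul_inv, ← zpow_neg, ← rpow_neg hρ.le, ← zpow_natCast, ← zpow_mul,
    ← rpow_intCast, mul_left_comm, ← rpow_add hρ, mul_comm]
  congr 2
  push_cast
  ring

lemma sq_mul_kernel_mul_weight {r : ℝ} (hr0 : 0 < r) (hr1 : r < 1) (n k : ℤ) (α : ℝ) :
    (2 * r ^ n) ^ 2 * (r ^ (-(2 * n + α)) * (-log r) ^ (-k)) * ((-log r) ^ (k - 2) * r ^ (-1 + α))
      = 4 * (r⁻¹ / log r ^ 2) := by
  have hL : -log r ≠ 0 := (neg_pos.2 (log_neg hr0 hr1)).ne'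
  have hr : (r ^ n) ^ 2 * r ^ (-(2 * n + α)) * r ^ (-1 + α) = r⁻¹ := by
    rw [← zpow_natCast, ← zpow_mul, ← rpow_intCast, ← rpow_add hr0, ← rpow_add hr0, ← rpow_neg_one]
    congr 1
    push_cast
    ring
  have hlog : (-log r) ^ (-k) * (-log r) ^ (k - 2) = (log r ^ 2)⁻¹ := by
    rw [← zpow_add₀ hL, show -k + (k - 2) = -2 by ring, zpow_neg, zpow_ofNat, neg_sq]
  calc _ = 4 * ((r ^ n) ^ 2 * r ^ (-(2 * n + α)) * r ^ (-1 + α)) *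
        ((-log r) ^ (-k) * (-log r) ^ (k - 2)) := by ring
    _ = _ := by rw [hr, hlog, div_eq_mul_inv, mul_assoc]

lemma integrableOn_zpow_smul_and_norm_sq_le {E : Type*} [NormedAddCommGroup E] [NormedSpace ℝ E]
    {n k : ℤ} {α A C : ℝ} (hA1 : A < 1)
    (hC : ∀ r ∈ Ioo 0 A, ∫ ρ in Ioo r A, ρ ^ (-(2 * n + α) - 1) * (-log ρ) ^ (-k)
      ≤ C * (r ^ (-(2 * n + α)) * (-log r) ^ (-k)))
    {f : ℝ → E} (hf : AEStronglyMeasurable f (volume.restrict (Ioo 0 A)))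
    (hfw : IntegrableOn (fun ρ => ‖f ρ‖ ^ 2 * (-log ρ) ^ k * ρ ^ (1 + α)) (Ioo 0 A))
    {r : ℝ} (hr : r ∈ Ioo 0 A) :
    IntegrableOn (fun ρ => (ρ ^ (-n) : ℝ) • f ρ) (Ioo r A) ∧
      ‖∫ ρ in Ioo r A, (ρ ^ (-n) : ℝ) • f ρ‖ ^ 2 ≤ C * (r ^ (-(2 * n + α)) * (-log r) ^ (-k)) *
        ∫ ρ in Ioo 0 A, ‖f ρ‖ ^ 2 * (-log ρ) ^ k * ρ ^ (1 + α) := by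
  have hsub : Ioo r A ⊆ Ioo 0 A := Ioo_subset_Ioo_left hr.1.le
  have hIcc : Icc r A ⊆ Ioo 0 1 := fun x hx => ⟨hr.1.trans_le hx.1, hx.2.trans_lt hA1⟩
  have hwpos : ∀ ρ ∈ Ioo 0 A, 0 < (-log ρ) ^ k * ρ ^ (1 + α) := fun ρ hρ =>
    mul_pos (zpow_pos (neg_pos.2 (log_neg hρ.1 (hρ.2.trans hA1))) _) (rpow_pos_of_pos hρ.1 _)
  have hw : ∀ᵐ ρ ∂(volume.restrict (Ioo r A)), 0 < (-log ρ) ^ k * ρ ^ (1 + α) :=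
    ae_restrict_of_forall_mem measurableSet_Ioo fun ρ hρ => hwpos ρ (hsub hρ)
  have hg : IntegrableOn (fun ρ => (ρ ^ (-n)) ^ 2 / ((-log ρ) ^ k * ρ ^ (1 + α))) (Ioo r A) :=
    ((continuousOn_rpow_mul_neg_log_zpow _ (-k) hIcc).integrableOn_Icc.mono_set
      Ioo_subset_Icc_self).congr_fun (fun ρ hρ => (zpow_neg_sq_div_weight (hsub hρ).1 n k α).symm)
      measurableSet_Ioo
  have hfw' : IntegrableOn (fun ρ => ‖f ρ‖ ^ 2 * ((-log ρ) ^ k * ρ ^ (1 + α))) (Ioo r A) := by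
    simpa only [mul_assoc] using hfw.mono_set hsub
  refine ⟨integrable_smul_of_weighted hw (by fun_prop) (hf.mono_set hsub) hg hfw', ?_⟩
  have hCS := norm_integral_smul_sq_le_of_weighted hw hg hfw'
  rw [setIntegral_congr_fun measurableSet_Ioo fun ρ hρ =>
    zpow_neg_sq_div_weight (hsub hρ).1 n k α] at hCS
  simp only [← mul_assoc] at hCS
  have hfw0 : ∀ ρ ∈ Ioo 0 A, 0 ≤ ‖f ρ‖ ^ 2 * (-log ρ) ^ k * ρ ^ (1 + α) := fun ρ hρ => by
    rw [mul_assoc]; exact mul_nonneg (sq_nonneg _) (hwpos ρ hρ).le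
  have hkernel0 : 0 ≤ ∫ ρ in Ioo r A, ρ ^ (-(2 * n + α) - 1) * (-log ρ) ^ (-k) :=
    setIntegral_nonneg measurableSet_Ioo fun ρ hρ =>
      have hρ := hIcc (Ioo_subset_Icc_self hρ)
      mul_nonneg (rpow_nonneg hρ.1.le _) (zpow_nonneg (neg_nonneg.2 (log_nonpos hρ.1.le hρ.2.le)) _)
  exact hCS.trans <| mul_le_mul (hC r hr)
    (setIntegral_mono_set hfw (ae_restrict_of_forall_mem measurableSet_Ioo hfw0)
      hsub.eventuallyLE)
    (setIntegral_nonneg measurableSet_Ioo fun ρ hρ => hfw0 ρ (hsub hρ)) (hkernel0.trans (hC r hr))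

lemma norm_smul_sq_mul_weight_le {E : Type*} [NormedAddCommGroup E] [NormedSpace ℝ E]
    {r : ℝ} (hr0 : 0 < r) (hr1 : r < 1) (n k : ℤ) (α : ℝ) {v : E} {C I : ℝ}
    (hv : ‖v‖ ^ 2 ≤ C * (r ^ (-(2 * n + α)) * (-log r) ^ (-k)) * I) :
    ‖(-(2 * r ^ n) : ℝ) • v‖ ^ 2 * (-log r) ^ (k - 2) * r ^ (-1 + α)
      ≤ 4 * C * I * (r⁻¹ / log r ^ 2) := by
  have hL : 0 < -log r := neg_pos.2 (log_neg hr0 hr1)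
  rw [norm_smul, norm_neg, mul_pow, Real.norm_eq_abs, sq_abs]
  calc (2 * r ^ n) ^ 2 * ‖v‖ ^ 2 * (-log r) ^ (k - 2) * r ^ (-1 + α)
      ≤ (2 * r ^ n) ^ 2 * (C * (r ^ (-(2 * n + α)) * (-log r) ^ (-k)) * I) *
          ((-log r) ^ (k - 2) * r ^ (-1 + α)) := by
        rw [mul_assoc _ ((-log r) ^ (k - 2))]
        gcongr
    _ = C * I * ((2 * r ^ n) ^ 2 * (r ^ (-(2 * n + α)) * (-log r) ^ (-k)) *
          ((-log r) ^ (k - 2) * r ^ (-1 + α))) := by ring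
    _ = _ := by rw [sq_mul_kernel_mul_weight hr0 hr1]; ring

theorem stmt_2_general (n : ℤ) (hn : 0 < n) (α : ℝ) (hα0 : 0 < α)
    (k : ℤ) (A : ℝ) (hA0 : 0 < A) (hA1 : A < 1) :
    ∃ C : ℝ, 0 < C ∧ ∀ f : ℝ → ℂ, Measurable f →
      IntegrableOn (fun ρ : ℝ => ‖f ρ‖ ^ 2 * (-Real.log ρ) ^ k * ρ ^ (1 + α)) (Ioo 0 A) →
      ((∀ r ∈ Ioo (0 : ℝ) A,
          IntegrableOn (fun ρ : ℝ => (ρ ^ (-n) : ℝ) • f ρ) (Ioo r A)) ∧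
        ∫ r in Ioo (0 : ℝ) A,
            ‖(-(2 * r ^ n) : ℝ) • ∫ ρ in Ioo r A, (ρ ^ (-n) : ℝ) • f ρ‖ ^ 2
              * (-Real.log r) ^ (k - 2) * r ^ (-1 + α)
          ≤ C * ∫ ρ in Ioo (0 : ℝ) A, ‖f ρ‖ ^ 2 * (-Real.log ρ) ^ k * ρ ^ (1 + α)) := by
  have hβ : 0 < 2 * (n : ℝ) + α := by
    have : (0 : ℝ) < n := by exact_mod_cast hn
    positivity
  obtain ⟨C, hC0, hC⟩ := exists_integral_rpow_mul_neg_log_zpow_le hβ (-k) hA0 hA1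
  have hinvlogA : 0 < -(log A)⁻¹ := neg_pos.2 (inv_lt_zero.2 (log_neg hA0 hA1))
  refine ⟨4 * C * -(log A)⁻¹, by positivity, fun f hf hfw => ?_⟩
  have hlocal := fun r (hr : r ∈ Ioo 0 A) =>
    integrableOn_zpow_smul_and_norm_sq_le hA1 hC hf.aestronglyMeasurable hfw hr
  refine ⟨fun r hr => (hlocal r hr).1, ?_⟩
  calc _ ≤ ∫ r in Ioo 0 A, 4 * C * (∫ ρ in Ioo 0 A, ‖f ρ‖ ^ 2 * (-log ρ) ^ k * ρ ^ (1 + α)) *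
          (r⁻¹ / log r ^ 2) :=
        integral_mono_of_nonneg
          (ae_restrict_of_forall_mem measurableSet_Ioo fun r hr => by
            have := rpow_nonneg hr.1.le (-1 + α)
            have := neg_pos.2 (log_neg hr.1 (hr.2.trans hA1))
            positivity)
          ((integrableOn_inv_div_log_sq_Ioo_zero hA1).const_mul _)
          (ae_restrict_of_forall_mem measurableSet_Ioo fun r hr =>
            norm_smul_sq_mul_weight_le hr.1 (hr.2.trans hA1) n k α (hlocal r hr).2)
    _ = _ := by rw [integral_const_mul, integral_inv_div_log_sq_Ioo_zero hA0.le hA1]; ring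

/-- Weighted Hardy-type inequality, case `n > 0`, from the proof of Lemma 3. -/
theorem stmt_2 (n : ℤ) (hn : 0 < n) (α : ℝ) (hα0 : 0 < α) (hα1 : α < 1)
    (k : ℤ) (A : ℝ) (hA0 : 0 < A) (hA1 : A < 1) :
    ∃ C : ℝ, 0 < C ∧ ∀ f : ℝ → ℂ, Measurable f →
      IntegrableOn (fun ρ : ℝ => ‖f ρ‖ ^ 2 * (-Real.log ρ) ^ k * ρ ^ (1 + α)) (Ioo 0 A) →
      ((∀ r ∈ Ioo (0 : ℝ) A,
          IntegrableOn (fun ρ : ℝ => (ρ ^ (-n) : ℝ) • f ρ) (Ioo r A)) ∧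
        ∫ r in Ioo (0 : ℝ) A,
            ‖(-(2 * r ^ n) : ℝ) • ∫ ρ in Ioo r A, (ρ ^ (-n) : ℝ) • f ρ‖ ^ 2
              * (-Real.log r) ^ (k - 2) * r ^ (-1 + α)
          ≤ C * ∫ ρ in Ioo (0 : ℝ) A, ‖f ρ‖ ^ 2 * (-Real.log ρ) ^ k * ρ ^ (1 + α)) :=
  stmt_2_general n hn α hα0 k A hA0 hA1
end

section
/- Let 0<α<1, k∈ℤ, and 0<A<1. Then there exists a constant C>0 such that for every measurable function f:(0,A)→ℂ and every r∈(0,A), one has the pointwise Cauchy–Schwarz bound (∫_r^A |f(ρ)| dρ)² ≤ C · (∫_r^A |f(ρ)|² |log ρ|^{1+k} ρ^{1+α} dρ) · r^{-α} |log r|^{-k}. -/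
/-!
Cauchy–Schwarz with the weight `w ρ = |log ρ|^(1+k) ρ^(1+α)` reduces the bound to
`∫_r^A w⁻¹ ≤ C F(r)` with `F ρ = ρ^(-α) |log ρ|^(-k)`. Since `-F' = (α |log ρ| - k) w⁻¹`, on the
interval `(0, B]` where `α |log ρ| - k ≥ 1` the function `F` decreases and `-F' ≥ w⁻¹`, so
`∫_r^B w⁻¹ ≤ F r`. The remaining integral over `[B, A]` is a constant, absorbed because `F` is
bounded below on `(0, A)` by its minimum over `[B, A]`.
-/

open MeasureTheory Set Real
open scoped ENNReal NNReal

/-- `|log x| ^ m * x ^ a` for `x ∈ (0, 1)`. -/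
noncomputable def powLog (a : ℝ) (m : ℤ) (x : ℝ) : ℝ := (-log x) ^ m * x ^ a

namespace powLog

variable (a : ℝ) (m : ℤ)

theorem pos {x : ℝ} (hx : x ∈ Ioo (0 : ℝ) 1) : 0 < powLog a m x :=
  mul_pos (zpow_pos (neg_pos.2 (log_neg hx.1 hx.2)) m) (rpow_pos_of_pos hx.1 a)

theorem inv {x : ℝ} (hx : 0 < x) : (powLog a m x)⁻¹ = powLog (-a) (-m) x := by
  rw [powLog, powLog, mul_inv, rpow_neg hx.le, zpow_neg]

theorem continuousOn : ContinuousOn (powLog a m) (Ioo 0 1) := by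
  intro x hx
  have hL : -log x ≠ 0 := (neg_pos.2 (log_neg hx.1 hx.2)).ne'
  exact (((continuousAt_zpow₀ _ m (Or.inl hL)).comp (f := fun y => -log y)
    (continuousAt_log hx.1.ne').neg).mul
    (continuousAt_rpow_const x a (Or.inl hx.1.ne'))).continuousWithinAt

theorem hasDerivAt {x : ℝ} (hx : x ∈ Ioo (0 : ℝ) 1) :
    HasDerivAt (powLog a m) (powLog (a - 1) (m - 1) x * (a * (-log x) - m)) x := by
  have hL : -log x ≠ 0 := (neg_pos.2 (log_neg hx.1 hx.2)).ne'
  refine (((hasDerivAt_zpow m _ (Or.inl hL)).comp x (hasDerivAt_log hx.1.ne').neg).mul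
    (hasDerivAt_rpow_const (p := a) (Or.inl hx.1.ne'))).congr_deriv ?_
  have hlog : log x ≠ 0 := neg_ne_zero.1 hL
  simp only [powLog, Function.comp_apply, Pi.neg_apply, rpow_sub_one hx.1.ne', zpow_sub_one₀ hL]
  field_simp
  ring

theorem intervalIntegrable {r s : ℝ} (hr : 0 < r) (hs : s < 1) (hrs : r ≤ s) :
    IntervalIntegrable (powLog a m) volume r s :=
  ((continuousOn a m).mono (Icc_subset_Ioo hr hs)).intervalIntegrable_of_Icc hrs

theorem one_le_sub_mul_neg_log (ha : a < 0) {x : ℝ} (hx : 0 < x) (hxB : x ≤ exp ((1 - m) / a)) :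
    1 ≤ m - a * (-log x) := by
  have : log x ≤ (1 - m) / a := (log_le_iff_le_exp hx).2 hxB
  rw [le_div_iff_of_neg ha] at this
  linarith

theorem integral_le_sub {r B : ℝ} (hr : 0 < r) (hrB : r ≤ B) (hB : B < 1)
    (h : ∀ x ∈ Icc r B, 1 ≤ m - a * (-log x)) :
    ∫ x in r..B, powLog (a - 1) (m - 1) x ≤ powLog a m r - powLog a m B := by
  have hsub : Icc r B ⊆ Ioo 0 1 := Icc_subset_Ioo hr hB
  have hderivInt : IntervalIntegrable (fun x => powLog (a - 1) (m - 1) x * (a * (-log x) - m))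
      volume r B := by
    refine ContinuousOn.intervalIntegrable_of_Icc hrB ?_
    exact ((continuousOn _ _).mono hsub).mul
      (continuousOn_const.mul (continuousOn_log.mono fun x hx => (hsub hx).1.ne').neg |>.sub
        continuousOn_const)
  calc ∫ x in r..B, powLog (a - 1) (m - 1) x
      ≤ ∫ x in r..B, -(powLog (a - 1) (m - 1) x * (a * (-log x) - m)) := by
        refine intervalIntegral.integral_mono_on hrB (intervalIntegrable _ _ hr hB hrB)
          hderivInt.neg fun x hx => ?_
        rw [← mul_neg, neg_sub]
        exact le_mul_of_one_le_right (pos _ _ (hsub hx)).le (h x hx)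
    _ = powLog a m r - powLog a m B := by
        rw [intervalIntegral.integral_neg,
          intervalIntegral.integral_eq_sub_of_hasDerivAt
          (fun x hx => hasDerivAt a m (hsub (uIcc_of_le hrB ▸ hx))) hderivInt]
        ring

theorem exists_integral_le (ha : a < 0) {A : ℝ} (hA0 : 0 < A) (hA1 : A < 1) :
    ∃ C > 0, ∀ r ∈ Ioo 0 A, ∫ x in r..A, powLog (a - 1) (m - 1) x ≤ C * powLog a m r := by
  set B := min A (exp ((1 - m) / a))
  have hB0 : 0 < B := lt_min hA0 (exp_pos _)
  have hBA : B ≤ A := min_le_left _ _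
  have hB1 : B < 1 := hBA.trans_lt hA1
  have hsub : Icc B A ⊆ Ioo 0 1 := Icc_subset_Ioo hB0 hA1
  set M := ∫ x in B..A, powLog (a - 1) (m - 1) x
  have hM : 0 ≤ M :=
    intervalIntegral.integral_nonneg hBA fun x hx => (pos _ _ (hsub hx)).le
  obtain ⟨x₀, hx₀, hmin⟩ :=
    isCompact_Icc.exists_isMinOn (nonempty_Icc.2 hBA) ((continuousOn a m).mono hsub)
  have hc : 0 < powLog a m x₀ := pos _ _ (hsub hx₀)
  have hbounds : ∀ r ∈ Ioo 0 A, ∫ x in r..A, powLog (a - 1) (m - 1) x ≤ powLog a m r + M ∧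
      powLog a m x₀ ≤ powLog a m r := by
    intro r hr
    rcases lt_or_ge r B with hrB | hBr
    · have hle := integral_le_sub a m hr.1 hrB.le hB1 fun x hx =>
        one_le_sub_mul_neg_log a m ha (hr.1.trans_le hx.1) (hx.2.trans (min_le_right _ _))
      have h0 : 0 ≤ ∫ x in r..B, powLog (a - 1) (m - 1) x :=
        intervalIntegral.integral_nonneg hrB.le fun x hx =>
          (pos _ _ (Icc_subset_Ioo hr.1 hB1 hx)).le
      rw [← intervalIntegral.integral_add_adjacent_intervals
        (intervalIntegrable _ _ hr.1 hB1 hrB.le) (intervalIntegrable _ _ hB0 hA1 hBA)]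
      exact ⟨by linarith [pos a m ⟨hB0, hB1⟩], (hmin ⟨le_rfl, hBA⟩).trans (by linarith)⟩
    · refine ⟨?_, hmin ⟨hBr, hr.2.le⟩⟩
      have : ∫ x in r..A, powLog (a - 1) (m - 1) x ≤ M :=
        intervalIntegral.integral_mono_interval hBr hr.2.le le_rfl
          ((ae_restrict_iff' measurableSet_Ioc).2 <| ae_of_all _ fun x hx =>
            (pos _ _ (hsub (Ioc_subset_Icc_self hx))).le) (intervalIntegrable _ _ hB0 hA1 hBA)
      linarith [pos a m ⟨hr.1, hr.2.trans hA1⟩]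
  refine ⟨1 + M / powLog a m x₀, by positivity, fun r hr => ?_⟩
  obtain ⟨hint, hlow⟩ := hbounds r hr
  have : M ≤ M / powLog a m x₀ * powLog a m r := by
    rw [div_mul_eq_mul_div, le_div_iff₀ hc]
    exact mul_le_mul_of_nonneg_left hlow hM
  linarith

theorem lintegral_inv_ofReal_Ioo {r s : ℝ} (hr : 0 < r) (hs : s < 1) (hrs : r ≤ s) :
    ∫⁻ x in Ioo r s, (ENNReal.ofReal (powLog a m x))⁻¹ =
      ENNReal.ofReal (∫ x in r..s, powLog (-a) (-m) x) := by
  have hsub : Ioc r s ⊆ Ioo 0 1 := Ioc_subset_Icc_self.trans (Icc_subset_Ioo hr hs)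
  rw [intervalIntegral.integral_of_le hrs, ofReal_integral_eq_lintegral_ofReal
    (intervalIntegrable _ _ hr hs hrs).1
    ((ae_restrict_iff' measurableSet_Ioc).2 <| ae_of_all _ fun x hx => (pos _ _ (hsub hx)).le),
    ← setLIntegral_congr Ioo_ae_eq_Ioc]
  refine setLIntegral_congr_fun measurableSet_Ioo fun x hx => ?_
  rw [← inv _ _ (hsub (Ioo_subset_Ioc_self hx)).1,
    ENNReal.ofReal_inv_of_pos (pos _ _ (hsub (Ioo_subset_Ioc_self hx)))]

end powLog

namespace ENNReal

variable {X : Type*} [MeasurableSpace X] {μ : Measure X}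

theorem lintegral_mul_sq_le {f g : X → ℝ≥0∞} (hf : AEMeasurable f μ)
    (hg : AEMeasurable g μ) :
    (∫⁻ x, f x * g x ∂μ) ^ 2 ≤ (∫⁻ x, f x ^ 2 ∂μ) * ∫⁻ x, g x ^ 2 ∂μ := by
  have h := lintegral_mul_le_Lp_mul_Lq μ Real.HolderConjugate.two_two hf hg
  simp only [Pi.mul_apply, rpow_two] at h
  calc (∫⁻ x, f x * g x ∂μ) ^ 2
      ≤ ((∫⁻ x, f x ^ 2 ∂μ) ^ (1 / 2 : ℝ) * (∫⁻ x, g x ^ 2 ∂μ) ^ (1 / 2 : ℝ)) ^ 2 := by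
        gcongr
    _ = (∫⁻ x, f x ^ 2 ∂μ) * ∫⁻ x, g x ^ 2 ∂μ := by
        rw [mul_pow, ← rpow_natCast, ← rpow_natCast, ← rpow_mul, ← rpow_mul]
        norm_num

theorem sq_rpow_half (x : ℝ≥0∞) : (x ^ (1 / 2 : ℝ)) ^ 2 = x := by
  rw [← rpow_natCast, ← rpow_mul]
  norm_num

theorem lintegral_sq_le_lintegral_mul_weight {f w : X → ℝ≥0∞} (hf : AEMeasurable f μ)
    (hw : AEMeasurable w μ) (hw0 : ∀ᵐ x ∂μ, w x ≠ 0) (hwt : ∀ᵐ x ∂μ, w x ≠ ∞) :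
    (∫⁻ x, f x ∂μ) ^ 2 ≤ (∫⁻ x, f x ^ 2 * w x ∂μ) * ∫⁻ x, (w x)⁻¹ ∂μ := by
  have hsplit :
      ∫⁻ x, f x ∂μ = ∫⁻ x, f x * w x ^ (1 / 2 : ℝ) * (w x)⁻¹ ^ (1 / 2 : ℝ) ∂μ := by
    refine lintegral_congr_ae ?_
    filter_upwards [hw0, hwt] with x h0 ht
    rw [mul_assoc, ← mul_rpow_of_nonneg _ _ (by norm_num), ENNReal.mul_inv_cancel h0 ht, one_rpow,
      mul_one]
  have hcs := lintegral_mul_sq_le (hf.mul (hw.pow_const (1 / 2 : ℝ)))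
    (hw.inv.pow_const (1 / 2 : ℝ))
  simp only [Pi.mul_apply, Pi.inv_apply, mul_pow, sq_rpow_half] at hcs
  rwa [hsplit]

end ENNReal

theorem stmt_3_general (α : ℝ) (hα0 : 0 < α)
    (k : ℤ) (A : ℝ) (hA0 : 0 < A) (hA1 : A < 1) :
    ∃ C : ℝ, 0 < C ∧ ∀ f : ℝ → ℂ, Measurable f → ∀ r ∈ Ioo (0 : ℝ) A,
      (∫⁻ ρ in Ioo r A, (‖f ρ‖₊ : ℝ≥0∞)) ^ 2 ≤
        ENNReal.ofReal C *
          (∫⁻ ρ in Ioo r A,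
            (‖f ρ‖₊ : ℝ≥0∞) ^ 2 * ENNReal.ofReal ((-Real.log ρ) ^ (1 + k) * ρ ^ (1 + α))) *
          ENNReal.ofReal (r ^ (-α) * (-Real.log r) ^ (-k)) := by
  obtain ⟨C, hC, hint⟩ := powLog.exists_integral_le (-α) (-k) (neg_lt_zero.2 hα0) hA0 hA1
  refine ⟨C, hC, fun f hf r hr => ?_⟩
  have hsub : Ioo r A ⊆ Ioo 0 1 := fun x hx => ⟨hr.1.trans hx.1, hx.2.trans hA1⟩
  have hinv := powLog.lintegral_inv_ofReal_Ioo (1 + α) (1 + k) hr.1 hA1 hr.2.le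
  rw [show -(1 + α) = -α - 1 by ring, show -(1 + k) = -k - 1 by ring] at hinv
  have hcs := ENNReal.lintegral_sq_le_lintegral_mul_weight
    (μ := volume.restrict (Ioo r A)) (w := fun ρ => ENNReal.ofReal (powLog (1 + α) (1 + k) ρ))
    hf.nnnorm.coe_nnreal_ennreal.aemeasurable
    ((ENNReal.continuous_ofReal.comp_continuousOn
      ((powLog.continuousOn _ _).mono hsub)).aemeasurable measurableSet_Ioo)
    ((ae_restrict_iff' measurableSet_Ioo).2 <| ae_of_all _ fun ρ hρ =>
      (ENNReal.ofReal_pos.2 (powLog.pos _ _ (hsub hρ))).ne')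
    (ae_of_all _ fun _ => ENNReal.ofReal_ne_top)
  rw [hinv] at hcs
  calc _ ≤ _ := hcs
    _ ≤ _ := mul_le_mul_right (ENNReal.ofReal_le_ofReal (hint r hr)) _
    _ = _ := by
        unfold powLog
        rw [ENNReal.ofReal_mul hC.le, mul_comm ((-log r) ^ (-k))]
        ring

/-- Pointwise Cauchy–Schwarz bound for `|u₀(r)|²` in the `n = 0` case of Lemma 3. -/
theorem stmt_3 (α : ℝ) (hα0 : 0 < α) (hα1 : α < 1)
    (k : ℤ) (A : ℝ) (hA0 : 0 < A) (hA1 : A < 1) :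
    ∃ C : ℝ, 0 < C ∧ ∀ f : ℝ → ℂ, Measurable f → ∀ r ∈ Ioo (0 : ℝ) A,
      (∫⁻ ρ in Ioo r A, (‖f ρ‖₊ : ℝ≥0∞)) ^ 2 ≤
        ENNReal.ofReal C *
          (∫⁻ ρ in Ioo r A,
            (‖f ρ‖₊ : ℝ≥0∞) ^ 2 * ENNReal.ofReal ((-Real.log ρ) ^ (1 + k) * ρ ^ (1 + α))) *
          ENNReal.ofReal (r ^ (-α) * (-Real.log r) ^ (-k)) :=
  stmt_3_general α hα0 k A hA0 hA1
end
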